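/- arXiv:2008.10176 — 2 statements merged into one kernel-verified Lean document; each statement's English description precedes it below -/
import Mathlib

section
/- Let G be a finite abstract simplicial complex ordered so that |x| ≤ |y| whenever x precedes y, and let h : G → ℂ. Then the matrix conj(g)·L is upper triangular with diagonal entries |h(x)|² for x ∈ G. -/
/-!
Write `s w = (-1) ^ (|w| - 1)`. Expanding the product, the `(x, y)` entry of `conj(g) · L` is
`s x · ∑_{z ⊇ x} ∑_{u ⊆ y} conj (h z) · h u · ∑_{w ∈ G, u ⊆ w ⊆ z} s w`. Since `G` contains every
nonempty subset of its faces, the inner sum runs over the whole Boolean interval `[u, z]`, so it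
is `s u` times the Möbius function of that interval and vanishes unless `u = z`. Hence the
entry is `s x · ∑_{x ⊆ z ⊆ y} s z · |h z|²`: it vanishes unless `x ⊆ y`, which for `y` preceding
`x` forces `x = y`, and on the diagonal it is `|h x|²`.
-/

open Finset

def IsSimplicialComplex (G : Finset (Finset ℕ)) : Prop :=
  (∀ x ∈ G, x.Nonempty) ∧ ∀ x ∈ G, ∀ y ⊆ x, y.Nonempty → y ∈ G

theorem Finset.sum_Icc_neg_one_pow_card {α : Type*} [DecidableEq α] {R : Type*} [Ring R]
    {s t : Finset α} (hst : s ⊆ t) :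
    ∑ u ∈ Icc s t, (-1 : R) ^ #u = if s = t then (-1) ^ #s else 0 := by
  have hdisj : ∀ v ∈ (t \ s).powerset, Disjoint s v := fun v hv =>
    disjoint_of_subset_right (mem_powerset.1 hv) disjoint_sdiff
  rw [Icc_eq_image_powerset hst, sum_image fun v hv w hw hvw => by
    rw [← union_sdiff_cancel_left (hdisj v hv), hvw, union_sdiff_cancel_left (hdisj w hw)]]
  calc ∑ v ∈ (t \ s).powerset, (-1 : R) ^ #(s ∪ v)
      = (-1) ^ #s * ((∑ v ∈ (t \ s).powerset, (-1 : ℤ) ^ #v : ℤ) : R) := by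
        push_cast
        rw [mul_sum]
        exact sum_congr rfl fun v hv => by rw [card_union_of_disjoint (hdisj v hv), pow_add]
    _ = if s = t then (-1) ^ #s else 0 := by
        have hts : t \ s = ∅ ↔ s = t :=
          sdiff_eq_empty_iff_subset.trans ⟨subset_antisymm hst, fun h => h ▸ subset_rfl⟩
        rw [sum_powerset_neg_one_pow_card]
        by_cases hs : s = t <;> simp [hs, hts]

namespace IsSimplicialComplex

variable {G : Finset (Finset ℕ)} {R : Type*}

theorem filter_subset_and_subset_eq_Icc (hG : IsSimplicialComplex G) {u z : Finset ℕ}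
    (hu : u ∈ G) (hz : z ∈ G) : {w ∈ G | u ⊆ w ∧ w ⊆ z} = Icc u z := by
  ext w
  rw [mem_filter, mem_Icc]
  exact ⟨And.right, fun huwz => ⟨hG.2 z hz w huwz.2 ((hG.1 u hu).mono huwz.1), huwz⟩⟩

theorem sum_neg_one_pow_card_sub_one_between [Ring R] (hG : IsSimplicialComplex G)
    {u z : Finset ℕ} (hu : u ∈ G) (hz : z ∈ G) :
    ∑ w ∈ G with u ⊆ w ∧ w ⊆ z, (-1 : R) ^ (#w - 1) = if u = z then (-1) ^ (#u - 1) else 0 := by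
  have neg_one_pow_pred : ∀ w : Finset ℕ, w.Nonempty → (-1 : R) ^ (#w - 1) = -(-1) ^ #w :=
    fun w hw => by
      obtain ⟨n, hn⟩ := Nat.exists_eq_add_one.2 hw.card_pos
      rw [hn, Nat.add_sub_cancel, pow_succ, mul_neg_one, neg_neg]
  by_cases huz : u ⊆ z
  · rw [hG.filter_subset_and_subset_eq_Icc hu hz,
      sum_congr rfl fun w hw => neg_one_pow_pred w ((hG.1 u hu).mono (mem_Icc.1 hw).1),
      sum_neg_distrib, sum_Icc_neg_one_pow_card huz, neg_one_pow_pred u (hG.1 u hu)]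
    split_ifs <;> simp
  · rw [filter_false_of_mem fun w _ huwz => huz (huwz.1.trans huwz.2), sum_empty,
      if_neg fun h => huz h.subset]

theorem sum_signed_cofaceSum_mul_faceSum [CommRing R] (hG : IsSimplicialComplex G)
    (a b : Finset ℕ → R) (x y : Finset ℕ) :
    ∑ w ∈ G, ((-1) ^ (#x - 1) * (-1) ^ (#w - 1) * ∑ z ∈ G with x ⊆ z ∧ w ⊆ z, a z) *
        ∑ u ∈ G with u ⊆ w ∧ u ⊆ y, b u
      = (-1) ^ (#x - 1) * ∑ z ∈ G with x ⊆ z ∧ z ⊆ y, (-1) ^ (#z - 1) * (a z * b z) := by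
  set T : Finset ℕ → Finset ℕ → R := fun z u =>
    if x ⊆ z ∧ u ⊆ y then (-1) ^ (#x - 1) * (a z * b u) else 0
  calc _ = ∑ w ∈ G, ∑ z ∈ G, ∑ u ∈ G, T z u * if u ⊆ w ∧ w ⊆ z then (-1) ^ (#w - 1) else 0 := by
        refine sum_congr rfl fun w _ => ?_
        rw [sum_filter, sum_filter, mul_assoc, sum_mul_sum, mul_sum]
        refine sum_congr rfl fun z _ => ?_
        rw [mul_sum]
        refine sum_congr rfl fun u _ => ?_
        simp only [T, ite_mul, mul_ite, zero_mul, mul_zero]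
        split_ifs <;> grind
    _ = ∑ z ∈ G, ∑ u ∈ G, T z u * ∑ w ∈ G with u ⊆ w ∧ w ⊆ z, (-1) ^ (#w - 1) := by
        rw [sum_comm]
        refine sum_congr rfl fun z _ => ?_
        rw [sum_comm]
        exact sum_congr rfl fun u _ => by rw [sum_filter, mul_sum]
    _ = ∑ z ∈ G, ∑ u ∈ G, T z u * if u = z then (-1) ^ (#u - 1) else 0 :=
        sum_congr rfl fun z hz => sum_congr rfl fun u hu => by
          rw [hG.sum_neg_one_pow_card_sub_one_between hu hz]
    _ = _ := by
        simp only [mul_ite, mul_zero, sum_ite_eq', sum_filter, mul_sum, T]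
        refine sum_congr rfl fun z hz => ?_
        split_ifs <;> ring

end IsSimplicialComplex

theorem stmt10_general (G : Finset (Finset ℕ)) (hG : IsSimplicialComplex G)
    (h : Finset ℕ → ℂ)
    (ord : {x // x ∈ G} → ℕ)
    (hord : ∀ x y : {x // x ∈ G}, ord x < ord y → x.1.card ≤ y.1.card)
    (L g : Matrix {x // x ∈ G} {x // x ∈ G} ℂ)
    (hL : L = Matrix.of (fun x y =>
      ∑ z ∈ G.filter (fun z => z ⊆ x.1 ∧ z ⊆ y.1), h z))
    (hg : g = Matrix.of (fun x y =>
      (-1 : ℂ) ^ (x.1.card - 1) * (-1 : ℂ) ^ (y.1.card - 1) *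
        ∑ z ∈ G.filter (fun z => x.1 ⊆ z ∧ y.1 ⊆ z), h z)) :
    (∀ x y : {x // x ∈ G}, ord y < ord x → (g.map (starRingEnd ℂ) * L) x y = 0)
    ∧ ∀ x : {x // x ∈ G},
        (g.map (starRingEnd ℂ) * L) x x = ((‖h x.1‖) ^ 2 : ℂ) := by
  have entry : ∀ x y : {x // x ∈ G}, (g.map (starRingEnd ℂ) * L) x y = (-1) ^ (#x.1 - 1) *
      ∑ z ∈ G with x.1 ⊆ z ∧ z ⊆ y.1, (-1) ^ (#z - 1) * (starRingEnd ℂ (h z) * h z) := by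
    intro x y
    subst hL hg
    simp only [Matrix.mul_apply, Matrix.map_apply, Matrix.of_apply, map_mul, map_pow, map_neg,
      map_one, map_sum]
    exact (sum_coe_sort G _).trans <| hG.sum_signed_cofaceSum_mul_faceSum _ h x.1 y.1
  refine ⟨fun x y hyx => ?_, fun x => ?_⟩
  · rw [entry, filter_false_of_mem, sum_empty, mul_zero]
    rintro z - ⟨hxz, hzy⟩
    have hxy : x = y := Subtype.ext (eq_of_subset_of_card_le (hxz.trans hzy) (hord y x hyx))
    exact hyx.ne (congrArg ord hxy).symm
  · have hx : {z ∈ G | x.1 ⊆ z ∧ z ⊆ x.1} = {x.1} := by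
      ext z
      rw [mem_filter, mem_singleton, ← subset_antisymm_iff, eq_comm]
      exact ⟨And.right, fun hz => ⟨hz ▸ x.2, hz⟩⟩
    rw [entry, hx, sum_singleton, ← mul_assoc, ← pow_add, Even.neg_one_pow ⟨_, rfl⟩, one_mul,
      Complex.conj_mul']

theorem stmt10 (G : Finset (Finset ℕ)) (hG : IsSimplicialComplex G)
    (h : Finset ℕ → ℂ)
    (ord : {x // x ∈ G} → ℕ) (hord_inj : Function.Injective ord)
    (hord : ∀ x y : {x // x ∈ G}, ord x < ord y → x.1.card ≤ y.1.card)
    (L g : Matrix {x // x ∈ G} {x // x ∈ G} ℂ)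
    (hL : L = Matrix.of (fun x y =>
      ∑ z ∈ G.filter (fun z => z ⊆ x.1 ∧ z ⊆ y.1), h z))
    (hg : g = Matrix.of (fun x y =>
      (-1 : ℂ) ^ (x.1.card - 1) * (-1 : ℂ) ^ (y.1.card - 1) *
        ∑ z ∈ G.filter (fun z => x.1 ⊆ z ∧ y.1 ⊆ z), h z)) :
    (∀ x y : {x // x ∈ G}, ord y < ord x → (g.map (starRingEnd ℂ) * L) x y = 0)
    ∧ ∀ x : {x // x ∈ G},
        (g.map (starRingEnd ℂ) * L) x x = ((‖h x.1‖) ^ 2 : ℂ) :=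
  stmt10_general G hG h ord hord L g hL hg
end

section
/- Let G be a finite abstract simplicial complex and h : G → ℝ. Then ∑_{x,y} g(x,y) = ∑_x h(x), where g(x,y) = ω(x)ω(y)∑_{z ∈ G, x ⊆ z, y ⊆ z} h(z). Moreover both sides are ℝ-linear in h. -/
open Finset

/-- The Green matrix entry for a real energy function. -/
def gEntR (G : Finset (Finset ℕ)) (h : Finset ℕ → ℝ) (x y : Finset ℕ) : ℝ :=
  (-1 : ℝ) ^ (x.card - 1) * (-1 : ℝ) ^ (y.card - 1) *
    ∑ z ∈ G.filter (fun z => x ⊆ z ∧ y ⊆ z), h z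

lemma key_sum (G : Finset (Finset ℕ)) (hG : IsSimplicialComplex G) {z : Finset ℕ}
    (hz : z ∈ G) : ∑ x ∈ G.filter (· ⊆ z), (-1 : ℝ) ^ (x.card - 1) = 1 := by
  have hfe : G.filter (· ⊆ z) = z.powerset.filter Finset.Nonempty := by
    ext a
    simp only [mem_filter, mem_powerset]
    constructor
    · rintro ⟨ha, haz⟩; exact ⟨haz, hG.1 a ha⟩
    · rintro ⟨haz, hne⟩; exact ⟨hG.2 z hz a haz hne, haz⟩
  rw [hfe]
  have hzero : ∑ m ∈ z.powerset, (-1 : ℝ) ^ m.card = 0 := by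
    have := Finset.sum_powerset_neg_one_pow_card_of_nonempty (hG.1 z hz)
    have := congrArg (fun n : ℤ => (n : ℝ)) this
    push_cast at this
    simpa using this
  have hsplit : ∑ m ∈ z.powerset, (-1 : ℝ) ^ m.card
      = (-1 : ℝ) ^ (∅ : Finset ℕ).card
        + ∑ m ∈ z.powerset.filter Finset.Nonempty, (-1 : ℝ) ^ m.card := by
    rw [← Finset.sum_filter_add_sum_filter_not z.powerset (· = ∅)]
    congr 1
    · rw [Finset.filter_eq']
      simp [Finset.empty_mem_powerset]
    · congr 1
      ext m
      simp [Finset.nonempty_iff_ne_empty]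
  have h1 : ∑ m ∈ z.powerset.filter Finset.Nonempty, (-1 : ℝ) ^ m.card = -1 := by
    have := hzero
    rw [hsplit] at this
    simp only [card_empty, pow_zero] at this
    linarith
  have h2 : ∀ m ∈ z.powerset.filter Finset.Nonempty,
      (-1 : ℝ) ^ (m.card - 1) = -((-1 : ℝ) ^ m.card) := by
    intro m hm
    have hne : m.Nonempty := (mem_filter.1 hm).2
    obtain ⟨n, hn⟩ : ∃ n, m.card = n + 1 := ⟨m.card - 1, by
      have := Finset.card_pos.2 hne; omega⟩
    rw [hn]
    simp [pow_succ]
  rw [Finset.sum_congr rfl h2, Finset.sum_neg_distrib, h1]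
  norm_num

theorem stmt17 (G : Finset (Finset ℕ)) (hG : IsSimplicialComplex G) :
    (∀ h : Finset ℕ → ℝ, ∑ x ∈ G, ∑ y ∈ G, gEntR G h x y = ∑ x ∈ G, h x)
    ∧ (∀ h₁ h₂ : Finset ℕ → ℝ, ∀ t : ℝ,
        (∑ x ∈ G, ∑ y ∈ G, gEntR G (fun z => h₁ z + t * h₂ z) x y
            = (∑ x ∈ G, ∑ y ∈ G, gEntR G h₁ x y)
              + t * ∑ x ∈ G, ∑ y ∈ G, gEntR G h₂ x y)
        ∧ (∑ x ∈ G, (h₁ x + t * h₂ x)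
            = (∑ x ∈ G, h₁ x) + t * ∑ x ∈ G, h₂ x)) := by
  constructor
  · intro h
    have step : ∀ x y : Finset ℕ, gEntR G h x y
        = ∑ z ∈ G, (if x ⊆ z then (-1 : ℝ) ^ (x.card - 1) else 0)
            * ((if y ⊆ z then (-1 : ℝ) ^ (y.card - 1) else 0) * h z) := by
      intro x y
      rw [gEntR, Finset.sum_filter, Finset.mul_sum]
      apply Finset.sum_congr rfl
      intro z _
      by_cases h1 : x ⊆ z <;> by_cases h2 : y ⊆ z <;> simp [h1, h2] <;> ring
    calc ∑ x ∈ G, ∑ y ∈ G, gEntR G h x y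
        = ∑ z ∈ G, (∑ x ∈ G, if x ⊆ z then (-1 : ℝ) ^ (x.card - 1) else 0)
            * ((∑ y ∈ G, if y ⊆ z then (-1 : ℝ) ^ (y.card - 1) else 0) * h z) := by
          simp only [step]
          rw [show (∑ x ∈ G, ∑ y ∈ G, ∑ z ∈ G,
              (if x ⊆ z then (-1 : ℝ) ^ (x.card - 1) else 0)
                * ((if y ⊆ z then (-1 : ℝ) ^ (y.card - 1) else 0) * h z))
              = ∑ x ∈ G, ∑ z ∈ G, ∑ y ∈ G,
              (if x ⊆ z then (-1 : ℝ) ^ (x.card - 1) else 0)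
                * ((if y ⊆ z then (-1 : ℝ) ^ (y.card - 1) else 0) * h z) from
            Finset.sum_congr rfl fun x _ => Finset.sum_comm, Finset.sum_comm]
          apply Finset.sum_congr rfl
          intro z _
          rw [Finset.sum_mul]
          apply Finset.sum_congr rfl
          intro x _
          rw [Finset.sum_mul, Finset.mul_sum]
      _ = ∑ z ∈ G, h z := by
          apply Finset.sum_congr rfl
          intro z hz
          rw [← Finset.sum_filter, key_sum G hG hz]
          simp
  · intro h₁ h₂ t
    constructor
    · have step : ∀ x y : Finset ℕ, gEntR G (fun z => h₁ z + t * h₂ z) x y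
          = gEntR G h₁ x y + t * gEntR G h₂ x y := by
        intro x y
        simp only [gEntR, Finset.sum_add_distrib, ← Finset.mul_sum]
        ring
      simp only [step, Finset.sum_add_distrib, Finset.mul_sum]
    · simp [Finset.sum_add_distrib, Finset.mul_sum]
end
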